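/- arXiv:2409.06823 — 7 statements merged into one kernel-verified Lean document; each statement's English description precedes it below -/
import Mathlib

section
/- Let (X, Y) be a cotorsion pair in an abelian category M, let l : A → B be a monomorphism with cokernel in X, and let r : C → D be an epimorphism with kernel in Y. Then l has the left lifting property with respect to r: for any commutative square with l on the left and r on the right, there exists a diagonal morphism h : B → C making both triangles commute. -/
/-!
Pulling `r` back along the bottom of the square reduces the problem to finding a section `s` of
`π : B ×_D C ⟶ B`, whose kernel is `ker r`, with `l ≫ s = u` for the induced `u : A ⟶ B ×_D C`.
Since `u ≫ π = l` is mono and `π` is epi, the kernel–cokernel sequence of this composition gives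
a short exact sequence `0 ⟶ ker π ⟶ coker u ⟶ coker l ⟶ 0`, which splits as
`Ext¹(coker l, ker r) = 0`. A splitting `t` turns `𝟙` into the endomorphism
`𝟙 + cokernel.π u ≫ t ≫ kernel.ι π`, which vanishes on `ker π`; so it factors through `π`,
and the factorization is the required section.
-/

open CategoryTheory Limits

/-- `Ext1Zero X Y` expresses the vanishing of the Yoneda Ext group `Ext¹(X, Y)`:
every short exact sequence `0 ⟶ Y ⟶ E ⟶ X ⟶ 0` splits. -/
def Ext1Zero {M : Type*} [Category M] [Abelian M] (X Y : M) : Prop :=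
  ∀ (E : M) (i : Y ⟶ E) (p : E ⟶ X) (w : i ≫ p = 0),
    (ShortComplex.mk i p w).ShortExact → ∃ r : E ⟶ Y, i ≫ r = 𝟙 Y

/-- `(𝒳, 𝒴)` is a cotorsion pair: each class is the `Ext¹`-orthogonal of the other. -/
def IsCotorsionPair {M : Type*} [Category M] [Abelian M] (𝒳 𝒴 : Set M) : Prop :=
  (∀ A, A ∈ 𝒳 ↔ ∀ Y ∈ 𝒴, Ext1Zero A Y) ∧ (∀ B, B ∈ 𝒴 ↔ ∀ X ∈ 𝒳, Ext1Zero X B)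

section

variable {M : Type*} [Category M] [Abelian M]

lemma Ext1Zero.of_iso {X Y Y' : M} (h : Ext1Zero X Y) (e : Y ≅ Y') : Ext1Zero X Y' := by
  intro E i p w hS
  have hS' : (ShortComplex.mk (e.hom ≫ i) p (by simp [w])).ShortExact :=
    ShortComplex.shortExact_of_iso
      (ShortComplex.isoMk e.symm (Iso.refl E) (Iso.refl X) (by simp) (by simp)) hS
  obtain ⟨ρ, hρ⟩ := h E (e.hom ≫ i) p _ hS'
  refine ⟨ρ ≫ e.hom, ?_⟩
  rw [← cancel_epi e.hom]
  simp [reassoc_of% hρ]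

lemma kernelCokernelCompSequence_shortExact {X Y Z : M} (f : X ⟶ Y) (g : Y ⟶ Z)
    [Mono (f ≫ g)] [Epi g] :
    (ShortComplex.mk (kernelCokernelCompSequence.δ f g) (cokernel.map f (f ≫ g) (𝟙 _) g (by simp))
      ((kernelCokernelCompSequence_exact f g).toIsComplex.zero 2)).ShortExact := by
  have hS := kernelCokernelCompSequence_exact f g
  refine { exact := hS.exact 2, mono_f := ?_, epi_g := ?_ }
  · exact (hS.exact 1).mono_g ((isZero_kernel_of_mono (f ≫ g)).eq_of_src _ _)
  · exact (hS.exact 3).epi_f ((isZero_cokernel_of_epi g).eq_of_tgt _ _)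

lemma exists_section_of_ext1Zero {A B P : M} (l : A ⟶ B) (u : A ⟶ P) (π : P ⟶ B)
    (hul : u ≫ π = l) [Mono l] [Epi π] (h : Ext1Zero (cokernel l) (kernel π)) :
    ∃ s : B ⟶ P, l ≫ s = u ∧ s ≫ π = 𝟙 B := by
  subst hul
  obtain ⟨t, ht⟩ := h _ _ _ _ (kernelCokernelCompSequence_shortExact u π)
  rw [kernelCokernelCompSequence.δ_fac, Preadditive.neg_comp, neg_eq_iff_eq_neg,
    Category.assoc] at ht
  have hι : kernel.ι π ≫ (𝟙 P + cokernel.π u ≫ t ≫ kernel.ι π) = 0 := by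
    rw [Preadditive.comp_add, reassoc_of% ht]
    simp
  refine ⟨Abelian.epiDesc π _ hι, ?_, ?_⟩
  · simp
  · simp [← cancel_epi π]

lemma hasLiftingProperty_of_ext1Zero {A B C D : M} (l : A ⟶ B) (r : C ⟶ D) [Mono l] [Epi r]
    (h : Ext1Zero (cokernel l) (kernel r)) : HasLiftingProperty l r where
  sq_hasLift {f g} sq := by
    have hP := IsPullback.of_hasPullback g r
    have := isIso_kernel_map_of_isPullback hP
    obtain ⟨s, hls, hs⟩ := exists_section_of_ext1Zero l (pullback.lift l f sq.w.symm)
      (pullback.fst g r) (pullback.lift_fst _ _ _)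
      (h.of_iso (asIso (kernel.map _ _ _ _ hP.w)).symm)
    exact ⟨⟨{ l := s ≫ pullback.snd g r
              fac_left := by rw [reassoc_of% hls, pullback.lift_snd]
              fac_right := by rw [Category.assoc, ← pullback.condition, reassoc_of% hs] }⟩⟩

end

/-- If `(𝒳, 𝒴)` is a cotorsion pair, `l` is a monomorphism with cokernel in `𝒳` and
`r` is an epimorphism with kernel in `𝒴`, then `l` has the left lifting property
with respect to `r`. -/
theorem cotorsionPair_lifting
    {M : Type*} [Category M] [Abelian M] (𝒳 𝒴 : Set M)
    (hcp : IsCotorsionPair 𝒳 𝒴)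
    {A B C D : M} (l : A ⟶ B) (r : C ⟶ D)
    (hl : Mono l) (hlc : cokernel l ∈ 𝒳)
    (hr : Epi r) (hrk : kernel r ∈ 𝒴) :
    HasLiftingProperty l r :=
  hasLiftingProperty_of_ext1Zero l r ((hcp.1 _).mp hlc _ hrk)
end

section
/- Let (X, Y) be a cotorsion pair in an abelian category M such that Y is cogenerating (every object embeds into some object of Y). If (f_i : W_i → Z_i)_{i ∈ I} is a family of monomorphisms with cokernel in X such that the coproducts of the W_i and of the Z_i exist, then the coproduct morphism ∐ f_i : ∐ W_i → ∐ Z_i is a monomorphism with cokernel in X. -/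
open CategoryTheory Limits

/-!
Vanishing of `Ext¹(X, Y)` gives two lifting properties: a map `W ⟶ Y` extends along any
monomorphism `W ⟶ Z` with cokernel `X` (push the extension out along it), and a map `X ⟶ C`
lifts along any epimorphism `E ⟶ C` with kernel `Y` (pull the extension back along it).
Embed `∐ W` into some `Y ∈ 𝒴` and extend along each `f i`: the resulting map `∐ Z ⟶ Y`
composed with `∐ f` is that embedding, so `∐ f` is mono. The cokernel of `∐ f` is a coproduct
of the cokernels of the `f i`, and `Ext¹(-, Y)` vanishes on a coproduct once it vanishes on each
summand: lift every summand into the extension and assemble the lifts into a section.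
-/

section

variable {M : Type*} [Category M] [Abelian M]

namespace CategoryTheory.ShortComplex.ShortExact

lemma pullback {Y E C X : M} {i : Y ⟶ E} {p : E ⟶ C} {w : i ≫ p = 0}
    (hS : (ShortComplex.mk i p w).ShortExact) (g : X ⟶ C) :
    (ShortComplex.mk (pullback.lift i 0 (by simp [w]) : Y ⟶ Limits.pullback p g)
      (pullback.snd p g) (pullback.lift_snd _ _ _)).ShortExact := by
  have := hS.mono_f
  have := hS.epi_g
  refine .mk' ?_ (mono_of_mono_fac (pullback.lift_fst _ _ _)) inferInstance
  rw [exact_iff_exact_up_to_refinements]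
  intro T x hx
  obtain ⟨T', π, hπ, y, hy⟩ := hS.exact.exact_up_to_refinements (x ≫ pullback.fst p g)
    (by simp [pullback.condition, reassoc_of% hx])
  exact ⟨T', π, hπ, y, pullback.hom_ext (by simpa [pullback.lift_fst] using hy)
    (by simp [hx, pullback.lift_snd])⟩

lemma pushout {W Z X Y : M} {f : W ⟶ Z} {π : Z ⟶ X} {w : f ≫ π = 0}
    (hS : (ShortComplex.mk f π w).ShortExact) (φ : W ⟶ Y) :
    (ShortComplex.mk (pushout.inr f φ : Y ⟶ Limits.pushout f φ)
      (pushout.desc π 0 (by simp [w])) (pushout.inr_desc _ _ _)).ShortExact := by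
  have := hS.mono_f
  have := hS.epi_g
  refine .mk' ?_ inferInstance (epi_of_epi_fac (pushout.inl_desc _ _ _))
  rw [exact_iff_exact_up_to_refinements]
  intro T x hx
  obtain ⟨T₁, π₁, _, z, y, hx₁⟩ :=
    (IsPushout.of_hasPushout f φ).hom_eq_add_up_to_refinements x
  obtain ⟨T₂, π₂, _, v, hv⟩ := hS.exact.exact_up_to_refinements z
    (by simpa [reassoc_of% hx₁, pushout.inl_desc, pushout.inr_desc] using π₁ ≫= hx)
  refine ⟨T₂, π₂ ≫ π₁, inferInstance, v ≫ φ + π₂ ≫ y, ?_⟩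
  simp [hx₁, reassoc_of% hv, pushout.condition]

end CategoryTheory.ShortComplex.ShortExact

lemma shortExact_cokernel {W Z : M} (f : W ⟶ Z) [Mono f] :
    (ShortComplex.mk f (cokernel.π f) (cokernel.condition f)).ShortExact :=
  .mk' (ShortComplex.exact_cokernel f) inferInstance inferInstance

namespace Ext1Zero

variable {X Y : M}

lemma exists_section (h : Ext1Zero X Y) {E : M} {i : Y ⟶ E} {p : E ⟶ X} {w : i ≫ p = 0}
    (hS : (ShortComplex.mk i p w).ShortExact) : ∃ s : X ⟶ E, s ≫ p = 𝟙 X := by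
  obtain ⟨r, hr⟩ := h E i p w hS
  exact ⟨_, (ShortComplex.Splitting.ofExactOfRetraction _ hS.exact r hr hS.epi_g).s_g⟩

lemma exists_lift (h : Ext1Zero X Y) {E C : M} {i : Y ⟶ E} {p : E ⟶ C} {w : i ≫ p = 0}
    (hS : (ShortComplex.mk i p w).ShortExact) (g : X ⟶ C) : ∃ t : X ⟶ E, t ≫ p = g := by
  obtain ⟨s, hs⟩ := h.exists_section (hS.pullback g)
  exact ⟨s ≫ pullback.fst p g, by rw [Category.assoc, pullback.condition, reassoc_of% hs]⟩

lemma exists_extension (h : Ext1Zero X Y) {W Z : M} {f : W ⟶ Z} {π : Z ⟶ X} {w : f ≫ π = 0}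
    (hS : (ShortComplex.mk f π w).ShortExact) (φ : W ⟶ Y) : ∃ ψ : Z ⟶ Y, f ≫ ψ = φ := by
  obtain ⟨r, hr⟩ := h _ _ _ _ (hS.pushout φ)
  exact ⟨pushout.inl f φ ≫ r, by rw [pushout.condition_assoc, hr, Category.comp_id]⟩

lemma of_isColimit_cofan {ι : Type*} {X : ι → M} {c : Cofan X} (hc : IsColimit c)
    (h : ∀ j, Ext1Zero (X j) Y) : Ext1Zero c.pt Y := by
  intro E i p w hS
  choose t ht using fun j => (h j).exists_lift hS (c.inj j)
  have hs : Cofan.IsColimit.desc hc t ≫ p = 𝟙 c.pt :=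
    Cofan.IsColimit.hom_ext hc _ _ (by simp [ht])
  exact ⟨_, (ShortComplex.Splitting.ofExactOfSection _ hS.exact _ hs hS.mono_f).f_r⟩

end Ext1Zero

section Coproduct

variable {ι : Type*} {W Z : ι → M} (f : ∀ i, W i ⟶ Z i) [HasCoproduct W] [HasCoproduct Z]

noncomputable def isColimitCokernelSigmaMap :
    IsColimit (Cofan.mk (cokernel (Limits.Sigma.map f)) fun i =>
      cokernel.map (f i) (Limits.Sigma.map f) (Sigma.ι W i) (Sigma.ι Z i) (by simp)) :=
  Cofan.IsColimit.mk _
    (fun t => cokernel.desc _ (Sigma.desc fun i => cokernel.π (f i) ≫ t.inj i) (by ext; simp))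
    (fun t i => by ext; simp)
    (fun t m hm => coequalizer.hom_ext (Sigma.hom_ext _ _ fun i => by simp [← hm]))

lemma mono_sigmaMap_of_ext1Zero (hf : ∀ i, Mono (f i)) {Y : M} (m : ∐ W ⟶ Y) [Mono m]
    (h : ∀ i, Ext1Zero (cokernel (f i)) Y) : Mono (Limits.Sigma.map f) := by
  choose g hg using fun i =>
    (h i).exists_extension (shortExact_cokernel (f i)) (Sigma.ι W i ≫ m)
  exact mono_of_mono_fac (show Limits.Sigma.map f ≫ Sigma.desc g = m by ext i; simp [hg])

end Coproduct

end

/-- Let `(𝒳, 𝒴)` be a cotorsion pair with `𝒴` cogenerating (every object embeds into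
an object of `𝒴`).  If `(f i : W i ⟶ Z i)` is a family of monomorphisms with
cokernels in `𝒳` such that the coproducts `∐ W` and `∐ Z` exist, then
`∐ f : ∐ W ⟶ ∐ Z` is a monomorphism with cokernel in `𝒳`. -/
theorem coproduct_of_X_monos
    {M : Type*} [Category M] [Abelian M] (𝒳 𝒴 : Set M)
    (hcp : IsCotorsionPair 𝒳 𝒴)
    (hcogen : ∀ A : M, ∃ Y ∈ 𝒴, ∃ m : A ⟶ Y, Mono m)
    {ι : Type*} (W Z : ι → M) (f : ∀ i, W i ⟶ Z i)
    [HasCoproduct W] [HasCoproduct Z]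
    (hmono : ∀ i, Mono (f i)) (hcok : ∀ i, cokernel (f i) ∈ 𝒳) :
    Mono (Limits.Sigma.map f) ∧ cokernel (Limits.Sigma.map f) ∈ 𝒳 := by
  have hext : ∀ i, ∀ Y ∈ 𝒴, Ext1Zero (cokernel (f i)) Y := fun i => (hcp.1 _).1 (hcok i)
  obtain ⟨Y₀, hY₀, m, hm⟩ := hcogen (∐ W)
  exact ⟨mono_sigmaMap_of_ext1Zero f hmono m fun i => hext i Y₀ hY₀,
    (hcp.1 _).2 fun Y hY =>
      Ext1Zero.of_isColimit_cofan (isColimitCokernelSigmaMap f) fun i => hext i Y hY⟩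
end

section
/- Let M be a cocomplete abelian category and Y a class of objects of M. If an object M of M admits a transfinite filtration (a well-ordered continuous direct system starting at 0 with successor maps monomorphisms and all successive quotients in the left Ext^1-orthogonal of Y) by objects of ⊥Y, then M itself belongs to ⊥Y, where ⊥Y = {M : Ext^1(M, Y) = 0 for all Y in Y}. -/
/-
A monomorphism `f` whose cokernel lies in `⊥𝒴` has the left lifting property against every
epimorphism `p : E ⟶ T` with kernel `Y ∈ 𝒴`: pull the extension back along the bottom of the
square, divide out the copy of the source of `f` given by the top of the square, and what is
left is an extension of `cokernel f` by `Y`; its splitting yields the lift. Left lifting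
properties are stable under transfinite composition, so `F.obj ⊥ ⟶ F.obj ⊤` lifts against
any `p : E ⟶ F.obj ⊤` with kernel in `𝒴`; as `F.obj ⊥ = 0`, the lift of the identity is a
section of `p`.
-/

open CategoryTheory Limits

variable {M : Type*} [Category M] [Abelian M]
variable {J : Type*} [LinearOrder J]

/-- The canonical cocone on the restriction of a `J`-indexed direct system `F` to the
elements `< x`, with apex `F.obj x`; the filtration is *continuous* at a limit element
`x` precisely when this cocone is a colimit cocone. -/
@[simps]
def coconeAt (F : J ⥤ M) (x : J) :
    Cocone ((Monotone.functor (f := fun y : Set.Iio x => (y : J))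
      (fun _ _ h => h)) ⋙ F) where
  pt := F.obj x
  ι :=
    { app := fun y => F.map (homOfLE (le_of_lt y.2))
      naturality := by
        intro a b f
        dsimp
        rw [Category.comp_id, ← F.map_comp]
        congr 1 }

lemma shortExact_pullback_snd {Y E T X : M} {i : Y ⟶ E} {p : E ⟶ T} {w : i ≫ p = 0}
    (hS : (ShortComplex.mk i p w).ShortExact) (g : X ⟶ T) :
    (ShortComplex.mk (pullback.lift i 0 (by simp [w])) (pullback.snd p g)
      (pullback.lift_snd _ _ _)).ShortExact := by
  have : Mono i := hS.mono_f
  have : Epi p := hS.epi_g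
  have : Mono (pullback.lift i 0 (by simp [w]) : Y ⟶ pullback p g) :=
    mono_of_mono_fac (pullback.lift_fst _ _ _)
  refine { exact := ShortComplex.exact_of_f_is_kernel _ <|
    KernelFork.IsLimit.ofι' _ _ fun {A} z hz => ?_ }
  have hzp : (z ≫ pullback.fst p g) ≫ p = 0 := by
    rw [Category.assoc, pullback.condition, reassoc_of% hz, zero_comp]
  refine ⟨hS.exact.lift _ hzp, pullback.hom_ext ?_ ?_⟩
  · rw [Category.assoc, pullback.lift_fst]; exact hS.exact.lift_f _ _
  · rw [Category.assoc, pullback.lift_snd, comp_zero]; exact hz.symm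

lemma exists_shortExact_cokernel_of_comp_eq {Y P X₁ X₂ : M} {k : Y ⟶ P} {q : P ⟶ X₂}
    {w : k ≫ q = 0} (hS : (ShortComplex.mk k q w).ShortExact) {f : X₁ ⟶ X₂} [Mono f]
    {u : X₁ ⟶ P} (hu : u ≫ q = f) :
    ∃ (q' : cokernel u ⟶ cokernel f) (w' : (k ≫ cokernel.π u) ≫ q' = 0),
      (ShortComplex.mk _ _ w').ShortExact := by
  have : Mono k := hS.mono_f
  have : Epi q := hS.epi_g
  have : Mono u := mono_of_mono_fac hu
  let q' := cokernel.desc u (q ≫ cokernel.π f) (by simp [reassoc_of% hu])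
  have hq' : cokernel.π u ≫ q' = q ≫ cokernel.π f := cokernel.π_desc _ _ _
  have hu_exact : (ShortComplex.mk u (cokernel.π u) (cokernel.condition u)).Exact :=
    ShortComplex.exact_of_g_is_cokernel _ (cokernelIsCokernel u)
  have hf_exact : (ShortComplex.mk f (cokernel.π f) (cokernel.condition f)).Exact :=
    ShortComplex.exact_of_g_is_cokernel _ (cokernelIsCokernel f)
  have : Mono (k ≫ cokernel.π u) := Preadditive.mono_of_cancel_zero _ fun z hz => by
    have hz' : (z ≫ k) ≫ cokernel.π u = 0 := by simpa using hz
    have hlift : hu_exact.lift _ hz' ≫ f = 0 := by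
      rw [← hu, ← Category.assoc, hu_exact.lift_f, Category.assoc, w, comp_zero]
    have hzk := hu_exact.lift_f _ hz'
    rw [zero_of_comp_mono f hlift, zero_comp] at hzk
    exact zero_of_comp_mono k hzk.symm
  have : Epi q' :=
    have : Epi (cokernel.π u ≫ q') := by rw [hq']; exact epi_comp _ _
    epi_of_epi (cokernel.π u) q'
  refine ⟨q', by rw [Category.assoc, hq', reassoc_of% w, zero_comp], { exact := ?_ }⟩
  rw [ShortComplex.exact_iff_exact_up_to_refinements]
  intro A z hz
  obtain ⟨A₁, π₁, _, z₁, hz₁⟩ := surjective_up_to_refinements_of_epi (cokernel.π u) z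
  obtain ⟨A₂, π₂, _, w₁, hw₁⟩ := hf_exact.exact_up_to_refinements (z₁ ≫ q) (by
    simpa [hz, hq'] using hz₁.symm =≫ q')
  obtain ⟨A₃, π₃, _, y, hy⟩ := hS.exact.exact_up_to_refinements (π₂ ≫ z₁ - w₁ ≫ u) (by
    rw [Preadditive.sub_comp, sub_eq_zero, Category.assoc, Category.assoc, hu]; exact hw₁)
  refine ⟨A₃, π₃ ≫ π₂ ≫ π₁, inferInstance, y, ?_⟩
  simpa [hz₁] using hy =≫ cokernel.π u

lemma exists_section_extending_of_ext1Zero_cokernel {Y P X₁ X₂ : M} {k : Y ⟶ P}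
    {q : P ⟶ X₂} {w : k ≫ q = 0} (hS : (ShortComplex.mk k q w).ShortExact) {f : X₁ ⟶ X₂}
    [Mono f] (hf : Ext1Zero (cokernel f) Y) {u : X₁ ⟶ P} (hu : u ≫ q = f) :
    ∃ t : X₂ ⟶ P, f ≫ t = u ∧ t ≫ q = 𝟙 X₂ := by
  have : Epi q := hS.epi_g
  obtain ⟨q', w', hS'⟩ := exists_shortExact_cokernel_of_comp_eq hS hu
  obtain ⟨ρ, hρ⟩ := hf _ _ _ w' hS'
  -- an idempotent of `P` killing `Y` and fixing `u`; it descends along `q` to the section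
  let e : P ⟶ P := 𝟙 P - cokernel.π u ≫ ρ ≫ k
  have hke : k ≫ e = 0 := by simp [e, reassoc_of% hρ]
  refine ⟨hS.exact.desc e hke, ?_, ?_⟩
  · rw [← hu, Category.assoc, hS.exact.g_desc]
    simp [e]
  · rw [← cancel_epi q, hS.exact.g_desc_assoc]
    simp [e, w]

lemma hasLiftingProperty_of_ext1Zero_cokernel {Y E T X₁ X₂ : M} {i : Y ⟶ E} {p : E ⟶ T}
    {w : i ≫ p = 0} (hS : (ShortComplex.mk i p w).ShortExact) (f : X₁ ⟶ X₂) [Mono f]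
    (hf : Ext1Zero (cokernel f) Y) : HasLiftingProperty f p where
  sq_hasLift {s g} sq := by
    obtain ⟨t, hft, htq⟩ := exists_section_extending_of_ext1Zero_cokernel
      (shortExact_pullback_snd hS g) hf (pullback.lift_snd s f sq.w)
    exact ⟨⟨{ l := t ≫ pullback.fst p g
              fac_left := by rw [reassoc_of% hft, pullback.lift_fst]
              fac_right := by
                rw [Category.assoc, pullback.condition, reassoc_of% htq] }⟩⟩

theorem eklof_lemma_general
    [SuccOrder J] [WellFoundedLT J] [OrderBot J] [OrderTop J]
    (𝒴 : Set M) (F : J ⥤ M)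
    -- the filtration starts at `0`
    (h0 : IsZero (F.obj ⊥))
    -- the successor maps are monomorphisms ...
    (hmono : ∀ x : J, ¬IsMax x → Mono (F.map (homOfLE (Order.le_succ x))))
    -- ... whose cokernels (the successive quotients) belong to `⊥𝒴`
    (hquot : ∀ x : J, ¬IsMax x →
      ∀ Y ∈ 𝒴, Ext1Zero (cokernel (F.map (homOfLE (Order.le_succ x)))) Y)
    -- the system is continuous at limit elements
    (hcont : ∀ x : J, Order.IsSuccLimit x → Nonempty (IsColimit (coconeAt F x))) :
    ∀ Y ∈ 𝒴, Ext1Zero (F.obj (⊤ : J)) Y := by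
  intro Y hY E i p w hS
  have : F.IsWellOrderContinuous := ⟨hcont⟩
  have : HasLiftingProperty (F.map (homOfLE bot_le : ⊥ ⟶ ⊤)) p :=
    HasLiftingProperty.transfiniteComposition.hasLiftingProperty_ι_app_bot
      (colimitOfDiagramTerminal isTerminalTop F) fun x hx =>
        have := hmono x hx
        hasLiftingProperty_of_ext1Zero_cokernel hS _ (hquot x hx Y hY)
  have : Epi p := hS.epi_g
  have sq : CommSq (0 : F.obj ⊥ ⟶ E) (F.map (homOfLE bot_le)) p (𝟙 _) :=
    ⟨h0.eq_of_src _ _⟩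
  let splitting :=
    ShortComplex.Splitting.ofExactOfSection _ hS.exact sq.lift sq.fac_right hS.mono_f
  exact ⟨splitting.r, splitting.f_r⟩

/-- **The Eklof Lemma.**  Let `M` be a cocomplete abelian category and `𝒴` a class of
objects of `M`.  If an object admits a transfinite filtration — a well-ordered
continuous direct system `F`, starting at `0`, whose successor maps are monomorphisms
with cokernels in `⊥𝒴 = {A | Ext¹(A, Y) = 0 for all Y ∈ 𝒴}` — then the top of the
filtration itself belongs to `⊥𝒴`. -/
theorem eklof_lemma [HasColimits M]
    [SuccOrder J] [WellFoundedLT J] [OrderBot J] [OrderTop J]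
    (𝒴 : Set M) (F : J ⥤ M)
    -- the filtration starts at `0`
    (h0 : IsZero (F.obj ⊥))
    -- the successor maps are monomorphisms ...
    (hmono : ∀ x : J, ¬IsMax x → Mono (F.map (homOfLE (Order.le_succ x))))
    -- ... whose cokernels (the successive quotients) belong to `⊥𝒴`
    (hquot : ∀ x : J, ¬IsMax x →
      ∀ Y ∈ 𝒴, Ext1Zero (cokernel (F.map (homOfLE (Order.le_succ x)))) Y)
    -- the system is continuous at limit elements
    (hcont : ∀ x : J, Order.IsSuccLimit x → Nonempty (IsColimit (coconeAt F x))) :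
    ∀ Y ∈ 𝒴, Ext1Zero (F.obj (⊤ : J)) Y :=
  eklof_lemma_general 𝒴 F h0 hmono hquot hcont
end

section
/- Given an adjoint triple (L, M, R) with L and R fully faithful (so the unit η : Id → ML and counit ε : MR → Id are invertible), the composite natural transformation L →(μL) RML →(Rη⁻¹) R equals the composite L →(Lε⁻¹) LMR →(λR) R, where λ is the counit of L ⊣ M and μ the unit of M ⊣ R. -/
open CategoryTheory

/-- Given an adjoint triple `L ⊣ M ⊣ R` with `L` and `R` fully faithful (so that the
unit `η : 𝟭 D ⟶ L ⋙ M` of `L ⊣ M` and the counit `ε : R ⋙ M ⟶ 𝟭 D` of `M ⊣ R`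
are invertible), the composite `L ⟶(μL) RML ⟶(Rη⁻¹) R` equals the composite
`L ⟶(Lε⁻¹) LMR ⟶(λR) R`, where `λ` is the counit of `L ⊣ M` and `μ` the unit of
`M ⊣ R`. -/
theorem jump_over_middle_adjoint
    {C D : Type*} [Category C] [Category D]
    (L : D ⥤ C) (M : C ⥤ D) (R : D ⥤ C)
    (adj₁ : L ⊣ M) (adj₂ : M ⊣ R)
    [L.Full] [L.Faithful] [R.Full] [R.Faithful] :
    ∀ Y : D,
      adj₂.unit.app (L.obj Y) ≫ R.map ((asIso adj₁.unit).inv.app Y) =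
        L.map ((asIso adj₂.counit).inv.app Y) ≫ adj₁.counit.app (R.obj Y) := by
  intro Y
  let t : Adjunction.Triple L M R := ⟨adj₁, adj₂⟩
  calc _ = t.leftToRight.app Y := by simp [t, t.leftToRight_app]
    _ = _ := by rw [t.leftToRight_eq_counits]; simp [t]
end

section
/- Let k be a field, C a k-linear inverse category with degree function deg : Obj(C) → λ, and X : C → Vect_k a k-linear functor. Then X admits a transfinite filtration 0 = X_{<0} ⊆ X_{<1} ⊆ ⋯ ⊆ X_{<λ} = X by subfunctors, continuous at limit ordinals, such that for each α < λ the quotient X_{<α+1}/X_{<α} is isomorphic to the direct sum over objects d of degree α of (dim X(d)) copies of the simple functor S_d. -/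
/-!
The filtration is by degree: `X_{<α}(d)` is all of `X(d)` when `deg d < α` and `0` otherwise.
It is a subfunctor because a nonzero morphism between distinct objects lowers the degree, so it
maps a fibre of degree `< α` into one of degree `< α`; the remaining properties are order
bookkeeping in the index (a `succ`-step adds exactly the objects of degree `α`, and at a limit
`β` every `deg d < β` is already below some `α < β`).
-/

open CategoryTheory

namespace CategoryTheory.Functor

variable {k : Type*} [Ring k] {C : Type*} [Category C] {ι : Type*}

open Classical in
noncomputable def degreeFiltration [Preorder ι] (deg : C → ι) (X : C ⥤ ModuleCat k) (α : ι)
    (d : C) : Submodule k (X.obj d) :=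
  if deg d < α then ⊤ else ⊥

section Preorder

variable [Preorder ι] (deg : C → ι) (X : C ⥤ ModuleCat k)

lemma degreeFiltration_of_lt {α : ι} {d : C} (h : deg d < α) :
    degreeFiltration deg X α d = ⊤ :=
  if_pos h

lemma degreeFiltration_of_not_lt {α : ι} {d : C} (h : ¬deg d < α) :
    degreeFiltration deg X α d = ⊥ :=
  if_neg h

lemma map_mem_degreeFiltration [Limits.HasZeroMorphisms C] [X.PreservesZeroMorphisms]
    (hinv : ∀ ⦃c d : C⦄ (f : c ⟶ d), c ≠ d → f ≠ 0 → deg d < deg c)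
    (α : ι) ⦃d e : C⦄ (f : d ⟶ e) (x : X.obj d) (hx : x ∈ degreeFiltration deg X α d) :
    X.map f x ∈ degreeFiltration deg X α e := by
  by_cases hd : deg d < α
  · obtain rfl | hde := eq_or_ne d e
    · simp [degreeFiltration_of_lt deg X hd]
    obtain rfl | hf := eq_or_ne f 0
    · simp
    simp [degreeFiltration_of_lt deg X ((hinv f hde hf).trans hd)]
  · rw [degreeFiltration_of_not_lt deg X hd, Submodule.mem_bot] at hx
    simp [hx]

lemma degreeFiltration_mono {α β : ι} (hαβ : α ≤ β) (d : C) :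
    degreeFiltration deg X α d ≤ degreeFiltration deg X β d := by
  by_cases hd : deg d < α
  · simp [degreeFiltration_of_lt deg X (hd.trans_le hαβ)]
  · simp [degreeFiltration_of_not_lt deg X hd]

lemma degreeFiltration_of_isMin {α : ι} (hα : IsMin α) (d : C) :
    degreeFiltration deg X α d = ⊥ :=
  degreeFiltration_of_not_lt deg X hα.not_lt

end Preorder

section LinearOrder

variable [LinearOrder ι] (deg : C → ι) (X : C ⥤ ModuleCat k)

lemma degreeFiltration_of_isSuccLimit {β : ι} (hβ : Order.IsSuccLimit β) (d : C) :
    degreeFiltration deg X β d = ⨆ (α : ι) (_ : α < β), degreeFiltration deg X α d := by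
  by_cases hd : deg d < β
  · obtain ⟨α, hαβ, hdα⟩ := hβ.lt_iff_exists_lt.mp hd
    rw [degreeFiltration_of_lt deg X hd]
    exact (top_unique <| le_iSup₂_of_le α hαβ (degreeFiltration_of_lt deg X hdα).ge).symm
  · rw [degreeFiltration_of_not_lt deg X hd]
    refine bot_le.antisymm (iSup₂_le fun α hαβ => ?_)
    exact (degreeFiltration_of_not_lt deg X fun h => hd (h.trans hαβ)).le

variable [SuccOrder ι] [NoMaxOrder ι]

lemma degreeFiltration_succ_of_eq {α : ι} {d : C} (hd : deg d = α) :
    degreeFiltration deg X (Order.succ α) d = ⊤ :=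
  degreeFiltration_of_lt deg X (hd ▸ Order.lt_succ (deg d))

lemma degreeFiltration_succ_of_ne {α : ι} {d : C} (hd : deg d ≠ α) :
    degreeFiltration deg X (Order.succ α) d = degreeFiltration deg X α d := by
  have : deg d < Order.succ α ↔ deg d < α := by
    rw [Order.lt_succ_iff, le_iff_lt_or_eq, or_iff_left hd]
  by_cases h : deg d < α
  · rw [degreeFiltration_of_lt deg X h, degreeFiltration_of_lt deg X (this.mpr h)]
  · rw [degreeFiltration_of_not_lt deg X h, degreeFiltration_of_not_lt deg X (this.not.mpr h)]

end LinearOrder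

end CategoryTheory.Functor

open Functor in
theorem inverse_category_filtration_by_simples_general
    (k : Type*) [Field k] (C : Type*) [SmallCategory C] [Preadditive C]
    (deg : C → Ordinal) (lam : Ordinal) (hdeg : ∀ c : C, deg c < lam)
    -- `C` is an inverse category:
    (hinv : ∀ ⦃c d : C⦄ (f : c ⟶ d), c ≠ d → f ≠ 0 → deg d < deg c)
    -- a `k`-linear functor `X : C ⥤ Vect_k`:
    (X : C ⥤ ModuleCat k) [X.Additive] :
    ∃ N : Ordinal → ∀ d : C, Submodule k (X.obj d),
      -- each `N α` is a subfunctor of `X`: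
      (∀ (α : Ordinal) ⦃d e : C⦄ (f : d ⟶ e) (x : X.obj d),
        x ∈ N α d → X.map f x ∈ N α e) ∧
      -- the filtration is increasing, starts at `0` and ends at `X`:
      (∀ α β : Ordinal, α ≤ β → ∀ d, N α d ≤ N β d) ∧
      (∀ d, N 0 d = ⊥) ∧ (∀ d, N lam d = ⊤) ∧
      -- continuity at limit ordinals:
      (∀ β : Ordinal, Order.IsSuccLimit β → ∀ d, N β d = ⨆ (α : Ordinal) (_ : α < β), N α d) ∧
      -- the successive quotients are sums of simple functors of the corresponding
      -- degree, with multiplicity `dim X(d)`: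
      (∀ (α : Ordinal) (d : C), α < lam →
        (deg d = α → N α d = ⊥ ∧ N (α + 1) d = ⊤) ∧
        (deg d ≠ α → N (α + 1) d = N α d)) := by
  refine ⟨degreeFiltration deg X, map_mem_degreeFiltration deg X hinv,
    fun α β hαβ => degreeFiltration_mono deg X hαβ,
    degreeFiltration_of_isMin deg X isMin_bot, fun d => degreeFiltration_of_lt deg X (hdeg d),
    fun β hβ => degreeFiltration_of_isSuccLimit deg X hβ,
    fun α d _ => ⟨fun hd => ?_, fun hd => ?_⟩⟩
  · rw [← Order.succ_eq_add_one]
    exact ⟨degreeFiltration_of_not_lt deg X hd.not_lt, degreeFiltration_succ_of_eq deg X hd⟩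
  · rw [← Order.succ_eq_add_one]
    exact degreeFiltration_succ_of_ne deg X hd

/-- Let `C` be a `k`-linear inverse category with degree function
`deg : Obj(C) → λ` (so `End(c) ≅ k` and every nonzero non-endomorphism strictly
lowers the degree) and let `X : C ⥤ Vect_k` be a `k`-linear functor.  Then `X`
admits a transfinite filtration `0 = X_{<0} ⊆ X_{<1} ⊆ ⋯ ⊆ X_{<λ} = X` by
subfunctors (given by a family `N α d ≤ X(d)` of subspaces stable under the action
of `C`), continuous at limit ordinals, such that for every `α < λ` the quotient
`X_{<α+1}/X_{<α}` is the direct sum, over objects `d` of degree `α`, of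
`dim X(d)` copies of the simple functor `S_d`; concretely: the subquotient at the
step `α` is supported exactly on the objects `d` of degree `α`, where its full
fibre is `X(d)` (i.e. `N α d = ⊥` and `N (α+1) d = ⊤` when `deg d = α`, and
`N (α+1) d = N α d` otherwise). -/
theorem inverse_category_filtration_by_simples
    (k : Type*) [Field k] (C : Type*) [SmallCategory C] [Preadditive C] [Linear k C]
    (deg : C → Ordinal) (lam : Ordinal) (hdeg : ∀ c : C, deg c < lam)
    -- `C` is an inverse category:
    (hend : ∀ (c : C) (f : c ⟶ c), ∃ a : k, f = a • 𝟙 c)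
    (hone : ∀ c : C, (𝟙 c) ≠ 0)
    (hinv : ∀ ⦃c d : C⦄ (f : c ⟶ d), c ≠ d → f ≠ 0 → deg d < deg c)
    -- a `k`-linear functor `X : C ⥤ Vect_k`:
    (X : C ⥤ ModuleCat k) [X.Additive] [Functor.Linear k X] :
    ∃ N : Ordinal → ∀ d : C, Submodule k (X.obj d),
      -- each `N α` is a subfunctor of `X`:
      (∀ (α : Ordinal) ⦃d e : C⦄ (f : d ⟶ e) (x : X.obj d),
        x ∈ N α d → X.map f x ∈ N α e) ∧
      -- the filtration is increasing, starts at `0` and ends at `X`: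
      (∀ α β : Ordinal, α ≤ β → ∀ d, N α d ≤ N β d) ∧
      (∀ d, N 0 d = ⊥) ∧ (∀ d, N lam d = ⊤) ∧
      -- continuity at limit ordinals:
      (∀ β : Ordinal, Order.IsSuccLimit β → ∀ d, N β d = ⨆ (α : Ordinal) (_ : α < β), N α d) ∧
      -- the successive quotients are sums of simple functors of the corresponding
      -- degree, with multiplicity `dim X(d)`:
      (∀ (α : Ordinal) (d : C), α < lam →
        (deg d = α → N α d = ⊥ ∧ N (α + 1) d = ⊤) ∧
        (deg d ≠ α → N (α + 1) d = N α d)) :=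
  inverse_category_filtration_by_simples_general k C deg lam hdeg hinv X
end

section
/- Let A be a finite dimensional k-algebra which is Reedy with respect to a complete set of orthogonal idempotents {e_0, ..., e_n}, a degree function deg, and subalgebras A⁺, A⁻. Then the semisimple algebra A⁰ := A⁺ ∩ A⁻ equals ⊕_{i=0}^n k·e_i, and the multiplication map A⁺ ⊗_{A⁰} A⁻ → A is an isomorphism of k-vector spaces (triangular decomposition). -/
open DirectSum TensorProduct

variable (k : Type*) [Field k]

section Defs

variable {A : Type*} [Ring A] [Algebra k A]

/-- The `k`-linear "corner" map `z ↦ x * z * y`. -/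
noncomputable def cornerMap (x y : A) : A →ₗ[k] A :=
  (LinearMap.mulLeft k x).comp (LinearMap.mulRight k y)

/-- The corner `x ⬝ N ⬝ y` of a `k`-submodule `N ≤ A`. -/
noncomputable def cornerSub (N : Submodule k A) (x y : A) : Submodule k A :=
  Submodule.map (cornerMap k x y) N

/-- Multiplication, as a `k`-linear map `N ⊗[k] N' →ₗ[k] A` on a pair of
submodules `N, N' ≤ A`. -/
noncomputable def mulTensor (N N' : Submodule k A) : (N ⊗[k] N') →ₗ[k] A :=
  TensorProduct.lift
    { toFun := fun x =>
        { toFun := fun y => (x : A) * (y : A)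
          map_add' := by intro a b; simp [mul_add]
          map_smul' := by intro a b; simp [mul_smul_comm] }
      map_add' := by intro a b; ext c; simp [add_mul]
      map_smul' := by intro a b; ext c; simp [smul_mul_assoc] }

/-- The multiplication map `⨁_l (N ⬝ e_l) ⊗[k] (e_l ⬝ N') →ₗ[k] A` for a family of
idempotents `e`. -/
noncomputable def triangularMulMap {n : ℕ} (e : Fin (n + 1) → A)
    (N N' : Submodule k A) :
    (⨁ l : Fin (n + 1), (↥(cornerSub k N 1 (e l)) ⊗[k] ↥(cornerSub k N' (e l) 1)))
      →ₗ[k] A :=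
  DirectSum.toModule k (Fin (n + 1)) A fun l =>
    mulTensor k (cornerSub k N 1 (e l)) (cornerSub k N' (e l) 1)

/-- The multiplication map `⨁_l (e_j ⬝ N ⬝ e_l) ⊗[k] (e_l ⬝ N' ⬝ e_i) →ₗ[k] A`. -/
noncomputable def cornerMulMap {n : ℕ} (e : Fin (n + 1) → A)
    (N N' : Submodule k A) (i j : Fin (n + 1)) :
    (⨁ l : Fin (n + 1),
      (↥(cornerSub k N (e j) (e l)) ⊗[k] ↥(cornerSub k N' (e l) (e i)))) →ₗ[k] A :=
  DirectSum.toModule k (Fin (n + 1)) A fun l =>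
    mulTensor k (cornerSub k N (e j) (e l)) (cornerSub k N' (e l) (e i))

end Defs

/-!
Since `∑ eᵢ = 1`, every `a ∈ A` is the sum of its Peirce components `eⱼ a eᵢ`. For
`a ∈ A⁺ ∩ A⁻` an off-diagonal component `eⱼ a eᵢ ≠ 0` would force both `deg i < deg j` and
`deg j < deg i`, and the diagonal ones lie in `k·eᵢ`. The multiplication map on
`⨁ₗ A⁺eₗ ⊗ eₗA⁻` is compatible with the Peirce decomposition: cutting both sides down to the
`(j, i)` corner turns it into the corner multiplication map, which is bijective onto
`eⱼ A eᵢ` by hypothesis.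
-/

open Function

section Peirce

variable {R ι : Type*} [Semiring R] [Fintype ι] {e : ι → R}

lemma sum_sum_mul_mul_eq_self (hc : ∑ i, e i = 1) (x : R) :
    ∑ i, ∑ j, e j * (x * e i) = x := by
  rw [Finset.sum_comm]
  simp_rw [← Finset.mul_sum, hc, mul_one, ← Finset.sum_mul, hc, one_mul]

end Peirce

section Corners

variable {A : Type*} [Ring A] [Algebra k A]

@[simp] lemma cornerMap_apply (x y z : A) : cornerMap k x y z = x * (z * y) := rfl

@[simp] lemma mulTensor_tmul (N N' : Submodule k A) (x : N) (y : N') :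
    mulTensor k N N' (x ⊗ₜ y) = (x : A) * (y : A) := rfl

lemma mulLeft_mem_cornerSub {N : Submodule k A} {y z : A} (x : A)
    (hz : z ∈ cornerSub k N 1 y) : LinearMap.mulLeft k x z ∈ cornerSub k N x y := by
  obtain ⟨a, ha, rfl⟩ := hz
  exact ⟨a, ha, by simp⟩

lemma mulRight_mem_cornerSub {N : Submodule k A} {x z : A} (y : A)
    (hz : z ∈ cornerSub k N x 1) : LinearMap.mulRight k y z ∈ cornerSub k N x y := by
  obtain ⟨a, ha, rfl⟩ := hz
  exact ⟨a, ha, by simp [mul_assoc]⟩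

lemma cornerSub_le_one_left (S : Subalgebra k A) {x : A} (y : A) (hx : x ∈ S) :
    cornerSub k (Subalgebra.toSubmodule S) x y ≤
      cornerSub k (Subalgebra.toSubmodule S) 1 y := by
  rintro _ ⟨a, ha, rfl⟩
  exact ⟨x * a, S.mul_mem hx ha, by simp [mul_assoc]⟩

lemma cornerSub_le_one_right (S : Subalgebra k A) (x : A) {y : A} (hy : y ∈ S) :
    cornerSub k (Subalgebra.toSubmodule S) x y ≤
      cornerSub k (Subalgebra.toSubmodule S) x 1 := by
  rintro _ ⟨a, ha, rfl⟩
  exact ⟨a * y, S.mul_mem ha hy, by simp⟩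

lemma mul_mul_eq_zero_of_mem_inf {ι α : Type*} [Preorder α] {e : ι → A} {deg : ι → α}
    {N N' : Submodule k A} {i j : ι}
    (hN : cornerSub k N (e j) (e i) ≠ ⊥ → deg i < deg j)
    (hN' : cornerSub k N' (e j) (e i) ≠ ⊥ → deg j < deg i)
    {x : A} (hx : x ∈ N ⊓ N') : e j * (x * e i) = 0 := by
  by_contra h
  have hne : ∀ M : Submodule k A, x ∈ M → cornerSub k M (e j) (e i) ≠ ⊥ := fun M hM =>
    (Submodule.ne_bot_iff _).mpr ⟨_, ⟨x, hM, rfl⟩, h⟩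
  exact lt_asymm (hN (hne N hx.1)) (hN' (hne N' hx.2))

lemma le_span_range_of_corners {ι : Type*} [Fintype ι] {e : ι → A} (hc : ∑ i, e i = 1)
    {N : Submodule k A} (hdiag : ∀ i, ∀ x ∈ N, ∃ a : k, e i * x * e i = a • e i)
    (hoff : ∀ i j, i ≠ j → ∀ x ∈ N, e j * (x * e i) = 0) :
    N ≤ Submodule.span k (Set.range e) := by
  intro x hx
  rw [← sum_sum_mul_mul_eq_self hc x]
  refine Submodule.sum_mem _ fun i _ => Submodule.sum_mem _ fun j _ => ?_
  obtain rfl | hij := eq_or_ne i j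
  · obtain ⟨a, ha⟩ := hdiag i x hx
    rw [← mul_assoc, ha]
    exact Submodule.smul_mem _ a (Submodule.subset_span ⟨i, rfl⟩)
  · rw [hoff i j hij x hx]
    exact zero_mem _

end Corners

section Triangular

variable {A : Type*} [Ring A] [Algebra k A] {n : ℕ} (e : Fin (n + 1) → A)
  (S T : Subalgebra k A)

noncomputable def cornerSumInclusion (heS : ∀ i, e i ∈ S) (heT : ∀ i, e i ∈ T)
    (i j : Fin (n + 1)) :
    (⨁ l : Fin (n + 1),
      (↥(cornerSub k (Subalgebra.toSubmodule S) (e j) (e l)) ⊗[k]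
        ↥(cornerSub k (Subalgebra.toSubmodule T) (e l) (e i)))) →ₗ[k]
    (⨁ l : Fin (n + 1),
      (↥(cornerSub k (Subalgebra.toSubmodule S) 1 (e l)) ⊗[k]
        ↥(cornerSub k (Subalgebra.toSubmodule T) (e l) 1))) :=
  DirectSum.lmap fun l =>
    TensorProduct.map (Submodule.inclusion (cornerSub_le_one_left k S (e l) (heS j)))
      (Submodule.inclusion (cornerSub_le_one_right k T (e l) (heT i)))

noncomputable def cornerSumProjection (i j : Fin (n + 1)) :
    (⨁ l : Fin (n + 1),
      (↥(cornerSub k (Subalgebra.toSubmodule S) 1 (e l)) ⊗[k]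
        ↥(cornerSub k (Subalgebra.toSubmodule T) (e l) 1))) →ₗ[k]
    (⨁ l : Fin (n + 1),
      (↥(cornerSub k (Subalgebra.toSubmodule S) (e j) (e l)) ⊗[k]
        ↥(cornerSub k (Subalgebra.toSubmodule T) (e l) (e i)))) :=
  DirectSum.lmap fun _ =>
    TensorProduct.map
      ((LinearMap.mulLeft k (e j)).restrict fun _ => mulLeft_mem_cornerSub k (e j))
      ((LinearMap.mulRight k (e i)).restrict fun _ => mulRight_mem_cornerSub k (e i))

variable {S T}

lemma triangularMulMap_comp_cornerSumInclusion (heS : ∀ i, e i ∈ S) (heT : ∀ i, e i ∈ T)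
    (i j : Fin (n + 1)) :
    triangularMulMap k e (Subalgebra.toSubmodule S) (Subalgebra.toSubmodule T) ∘ₗ
        cornerSumInclusion k e S T heS heT i j =
      cornerMulMap k e (Subalgebra.toSubmodule S) (Subalgebra.toSubmodule T) i j := by
  refine DirectSum.linearMap_ext _ fun l => TensorProduct.ext' fun x y => ?_
  simp [cornerSumInclusion, triangularMulMap, cornerMulMap]

lemma cornerMap_comp_triangularMulMap (i j : Fin (n + 1)) :
    cornerMap k (e j) (e i) ∘ₗ
        triangularMulMap k e (Subalgebra.toSubmodule S) (Subalgebra.toSubmodule T) =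
      cornerMulMap k e (Subalgebra.toSubmodule S) (Subalgebra.toSubmodule T) i j ∘ₗ
        cornerSumProjection k e S T i j := by
  refine DirectSum.linearMap_ext _ fun l => TensorProduct.ext' fun x y => ?_
  simp [cornerSumProjection, triangularMulMap, cornerMulMap, mul_assoc]

lemma sum_cornerSumInclusion_comp_cornerSumProjection (hc : ∑ i, e i = 1)
    (heS : ∀ i, e i ∈ S) (heT : ∀ i, e i ∈ T) :
    ∑ i, ∑ j, cornerSumInclusion k e S T heS heT i j ∘ₗ cornerSumProjection k e S T i j =
      LinearMap.id := by
  refine DirectSum.linearMap_ext _ fun l => TensorProduct.ext' fun x y => ?_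
  simp only [LinearMap.coe_sum, LinearMap.comp_apply, Finset.sum_apply, LinearMap.id_apply,
    cornerSumProjection, cornerSumInclusion, DirectSum.lmap_lof, TensorProduct.map_tmul]
  simp_rw [← map_sum, ← TensorProduct.sum_tmul, ← TensorProduct.tmul_sum]
  congr 2 <;> ext <;>
    simp [← Finset.sum_mul, ← Finset.mul_sum, hc]

lemma triangularMulMap_injective (hc : ∑ i, e i = 1) (heS : ∀ i, e i ∈ S) (heT : ∀ i, e i ∈ T)
    (hinj : ∀ i j, Injective
      (cornerMulMap k e (Subalgebra.toSubmodule S) (Subalgebra.toSubmodule T) i j)) :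
    Injective (triangularMulMap k e (Subalgebra.toSubmodule S) (Subalgebra.toSubmodule T)) := by
  intro x y hxy
  have hproj : ∀ i j, cornerSumProjection k e S T i j x = cornerSumProjection k e S T i j y :=
    fun i j => hinj i j <| by
      have h := LinearMap.congr_fun (cornerMap_comp_triangularMulMap k e (S := S) (T := T) i j)
      simp only [LinearMap.comp_apply] at h
      rw [← h, ← h, hxy]
  have hsum := LinearMap.congr_fun (sum_cornerSumInclusion_comp_cornerSumProjection k e hc heS heT)
  simp only [LinearMap.coe_sum, Finset.sum_apply, LinearMap.comp_apply,
    LinearMap.id_apply] at hsum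
  rw [← hsum x, ← hsum y]
  simp only [hproj]

lemma triangularMulMap_surjective (hc : ∑ i, e i = 1) (heS : ∀ i, e i ∈ S) (heT : ∀ i, e i ∈ T)
    (hrange : ∀ i j, LinearMap.range
      (cornerMulMap k e (Subalgebra.toSubmodule S) (Subalgebra.toSubmodule T) i j) =
        cornerSub k ⊤ (e j) (e i)) :
    Surjective (triangularMulMap k e (Subalgebra.toSubmodule S) (Subalgebra.toSubmodule T)) := by
  rw [← LinearMap.range_eq_top, eq_top_iff]
  intro a _
  rw [← sum_sum_mul_mul_eq_self hc a]
  refine Submodule.sum_mem _ fun i _ => Submodule.sum_mem _ fun j _ => ?_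
  have hmem : e j * (a * e i) ∈ LinearMap.range
      (cornerMulMap k e (Subalgebra.toSubmodule S) (Subalgebra.toSubmodule T) i j) :=
    hrange i j ▸ ⟨a, trivial, rfl⟩
  rw [← triangularMulMap_comp_cornerSumInclusion k e heS heT] at hmem
  exact LinearMap.range_comp_le_range _ _ hmem

end Triangular

theorem reedy_algebra_triangular_decomposition
    {A : Type*} [Ring A] [Algebra k A]
    {n : ℕ} (e : Fin (n + 1) → A)
    (he : CompleteOrthogonalIdempotents e)
    (deg : Fin (n + 1) → ℕ)
    (Ap Am : Subalgebra k A)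
    (heP : ∀ i, e i ∈ Ap) (heM : ∀ i, e i ∈ Am)
    -- `e_i A⁺ e_i ≅ k`
    (hPcorner : ∀ (i) (x : A), x ∈ Ap → ∃ a : k, e i * x * e i = a • e i)
    -- `e_j A⁺ e_i ≠ 0` (for `i ≠ j`) implies `deg j > deg i`
    (hPdeg : ∀ i j, i ≠ j →
      cornerSub k (Subalgebra.toSubmodule Ap) (e j) (e i) ≠ ⊥ → deg i < deg j)
    -- `e_j A⁻ e_i ≠ 0` (for `i ≠ j`) implies `deg j < deg i`
    (hMdeg : ∀ i j, i ≠ j →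
      cornerSub k (Subalgebra.toSubmodule Am) (e j) (e i) ≠ ⊥ → deg j < deg i)
    -- multiplication induces isomorphisms `⨁_l e_j A⁺ e_l ⊗[k] e_l A⁻ e_i ≅ e_j A e_i`
    (hfac : ∀ i j,
      Function.Injective
        (cornerMulMap k e (Subalgebra.toSubmodule Ap) (Subalgebra.toSubmodule Am) i j) ∧
      LinearMap.range
        (cornerMulMap k e (Subalgebra.toSubmodule Ap) (Subalgebra.toSubmodule Am) i j) =
        cornerSub k (⊤ : Submodule k A) (e j) (e i)) :
    -- `A⁰ := A⁺ ∩ A⁻ = ⨁_i k·e_i` ...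
    Subalgebra.toSubmodule Ap ⊓ Subalgebra.toSubmodule Am =
      Submodule.span k (Set.range e) ∧
    -- ... and multiplication `A⁺ ⊗_{A⁰} A⁻ = ⨁_l (A⁺ e_l) ⊗[k] (e_l A⁻) → A`
    -- is an isomorphism of `k`-vector spaces
    Function.Bijective
      (triangularMulMap k e (Subalgebra.toSubmodule Ap) (Subalgebra.toSubmodule Am)) := by
  refine ⟨le_antisymm ?_ ?_, triangularMulMap_injective k e he.complete heP heM (hfac · · |>.1),
    triangularMulMap_surjective k e he.complete heP heM (hfac · · |>.2)⟩
  · refine le_span_range_of_corners k he.complete (fun i x hx => hPcorner i x hx.1) ?_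
    exact fun i j hij x hx => mul_mul_eq_zero_of_mem_inf k (hPdeg i j hij) (hMdeg i j hij) hx
  · exact Submodule.span_le.mpr <| Set.range_subset_iff.mpr fun i => ⟨heP i, heM i⟩
end

section
/- Let Q be a quiver with relations I over a field k, where I consists of k-linear combinations of paths of length at least two, and let kQ_I be the associated k-linear path category. Then kQ_I is a k-linear direct category (i.e. End ≅ k for each object and there exists an ordinal-valued degree function strictly increased by every nonzero non-endomorphism) if and only if Q is left rooted. -/
open CategoryTheory

universe u

/-- The transfinite sequence of subsets of the vertex set of a quiver:
`V 0 = ∅`, `V (α+1) = {i | every arrow with target i has source in V α}`,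
and `V α = ⋃_{β < α} V β` for limit ordinals `α`. -/
noncomputable def rootedSets (V : Type u) [Quiver.{u + 1} V] : Ordinal.{u} → Set V :=
  fun o =>
    Ordinal.limitRecOn o
      (∅ : Set V)
      (fun _ ih => {i : V | ∀ ⦃j : V⦄, (j ⟶ i) → j ∈ ih})
      (fun o _ ih => {i : V | ∃ (o' : Ordinal) (h : o' < o), i ∈ ih o' h})

/-- A quiver is left rooted if the transfinite sequence `V_α` exhausts the vertex set. -/
def IsLeftRooted (V : Type u) [Quiver.{u + 1} V] : Prop :=
  ∃ lam : Ordinal.{u}, rootedSets V lam = Set.univ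

/-- The evaluation of a path of the quiver in a category `C` equipped with a
realization `F` of the arrows: the empty path goes to the identity and concatenation
to composition. -/
def evalPath {V : Type u} [Quiver.{u + 1} V] {C : Type*} [Category C] (vObj : V → C)
    (F : ∀ ⦃i j : V⦄, (i ⟶ j) → (vObj i ⟶ vObj j)) :
    ∀ {i j : V}, Quiver.Path i j → (vObj i ⟶ vObj j)
  | _, _, Quiver.Path.nil => 𝟙 _
  | _, _, Quiver.Path.cons p a => evalPath vObj F p ≫ F a

/-!
Left rootedness amounts to an ordinal rank on the vertices that strictly increases along every
arrow: the least `α` with `i ∈ V_α` is one, and conversely every vertex of rank `< α` lies in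
`V_α`. The degree function of a direct category gives such a rank, because an arrow `j ⟶ i` is
a nonzero morphism and `j ≠ i`: a loop `a` and the identity would be linearly dependent in
`End(i) = k`, while the relations involve only paths of length at least two. Conversely, a rank
rules out nontrivial paths `i ⟶ i`, so `End(i)` is spanned by the identity, and it strictly
increases along every nontrivial path, hence along every nonzero morphism between distinct
vertices.
-/

section LeftRooted

variable {V : Type u} [Quiver.{u + 1} V]

@[simp]
lemma rootedSets_zero : rootedSets V 0 = ∅ :=
  Ordinal.limitRecOn_zero _ _ _

lemma mem_rootedSets_add_one {o : Ordinal} {i : V} :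
    i ∈ rootedSets V (o + 1) ↔ ∀ ⦃j : V⦄, (j ⟶ i) → j ∈ rootedSets V o := by
  rw [rootedSets, Ordinal.limitRecOn_add_one]
  rfl

lemma mem_rootedSets_of_isSuccLimit {o : Ordinal} (ho : Order.IsSuccLimit o) {i : V} :
    i ∈ rootedSets V o ↔ ∃ o' < o, i ∈ rootedSets V o' := by
  rw [rootedSets, Ordinal.limitRecOn_limit _ _ _ _ ho]
  exact exists_congr fun _ => exists_prop

lemma exists_lt_mem_rootedSets_of_arrow {o : Ordinal} {i j : V} (hi : i ∈ rootedSets V o)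
    (a : j ⟶ i) : ∃ β < o, j ∈ rootedSets V β := by
  induction o using Ordinal.limitRecOn with
  | zero => simp at hi
  | add_one γ _ => exact ⟨γ, Order.lt_add_one_iff.2 le_rfl, mem_rootedSets_add_one.1 hi a⟩
  | limit o ho ih =>
    obtain ⟨o', ho', hio'⟩ := (mem_rootedSets_of_isSuccLimit ho).1 hi
    obtain ⟨β, hβ, hjβ⟩ := ih o' ho' hio'
    exact ⟨β, hβ.trans ho', hjβ⟩

lemma mem_rootedSets_of_rank_lt {r : V → Ordinal.{u}} (hr : ∀ ⦃i j : V⦄, (j ⟶ i) → r j < r i)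
    {o : Ordinal.{u}} {i : V} (hi : r i < o) : i ∈ rootedSets V o := by
  induction o using Ordinal.limitRecOn generalizing i with
  | zero => simp at hi
  | add_one γ ih =>
    exact mem_rootedSets_add_one.2 fun j a => ih ((hr a).trans_le (Order.lt_add_one_iff.1 hi))
  | limit o ho ih =>
    exact (mem_rootedSets_of_isSuccLimit ho).2
      ⟨r i + 1, ho.add_one_lt hi, ih _ (ho.add_one_lt hi) (Order.lt_add_one_iff.2 le_rfl)⟩

/-- The junk value is `0` when `i` lies in no `V_α`. -/
noncomputable def vertexRank (V : Type u) [Quiver.{u + 1} V] (i : V) : Ordinal.{u} :=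
  sInf {α : Ordinal | i ∈ rootedSets V α}

lemma IsLeftRooted.mem_rootedSets_vertexRank (h : IsLeftRooted V) (i : V) :
    i ∈ rootedSets V (vertexRank V i) := by
  obtain ⟨lam, hlam⟩ := h
  exact csInf_mem (s := {α : Ordinal | i ∈ rootedSets V α}) ⟨lam, by simp [hlam]⟩

lemma IsLeftRooted.vertexRank_lt_of_arrow (h : IsLeftRooted V) {i j : V} (a : j ⟶ i) :
    vertexRank V j < vertexRank V i := by
  obtain ⟨β, hβ, hjβ⟩ := exists_lt_mem_rootedSets_of_arrow (h.mem_rootedSets_vertexRank i) a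
  exact lt_of_le_of_lt (csInf_le' hjβ) hβ

theorem isLeftRooted_iff_exists_rank :
    IsLeftRooted V ↔ ∃ r : V → Ordinal.{u}, ∀ ⦃i j : V⦄, (j ⟶ i) → r j < r i := by
  refine ⟨fun h => ⟨vertexRank V, fun _ _ => h.vertexRank_lt_of_arrow⟩, fun ⟨r, hr⟩ => ?_⟩
  refine ⟨(⨆ i, r i) + 1, Set.eq_univ_of_forall fun i => mem_rootedSets_of_rank_lt hr ?_⟩
  exact Order.lt_add_one_iff.2 (Ordinal.le_iSup r i)

end LeftRooted

namespace Quiver.Path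

variable {V : Type*} [Quiver V] {α : Type*} [Preorder α] {r : V → α}

lemma apply_le_of_arrow_lt (hr : ∀ ⦃i j : V⦄, (j ⟶ i) → r j < r i) {i j : V} (p : Path i j) :
    r i ≤ r j := by
  induction p with
  | nil => exact le_rfl
  | cons _ a ih => exact ih.trans (hr a).le

lemma apply_lt_of_arrow_lt (hr : ∀ ⦃i j : V⦄, (j ⟶ i) → r j < r i) {i j : V} (p : Path i j)
    (hij : i ≠ j) : r i < r j := by
  cases p with
  | nil => exact absurd rfl hij
  | cons q a => exact (q.apply_le_of_arrow_lt hr).trans_lt (hr a)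

lemma eq_nil_of_arrow_lt (hr : ∀ ⦃i j : V⦄, (j ⟶ i) → r j < r i) {i : V} (p : Path i i) :
    p = nil := by
  cases p with
  | nil => rfl
  | cons q a => exact absurd ((q.apply_le_of_arrow_lt hr).trans_lt (hr a)) (lt_irrefl _)

end Quiver.Path

section EvalPath

variable {V : Type u} [Quiver.{u + 1} V] {C : Type*} [Category C] {vObj : V → C}
  {F : ∀ ⦃i j : V⦄, (i ⟶ j) → (vObj i ⟶ vObj j)}

@[simp]
lemma evalPath_nil {i : V} : evalPath vObj F (Quiver.Path.nil : Quiver.Path i i) = 𝟙 (vObj i) := by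
  simp [evalPath]

@[simp]
lemma evalPath_toPath {i j : V} (a : i ⟶ j) : evalPath vObj F a.toPath = F a := by
  simp [Quiver.Hom.toPath, evalPath]

end EvalPath

section PathCategory

variable {k : Type*} [Semiring k] {V : Type u} [Quiver.{u + 1} V]
  {C : Type*} [Category C] [Preadditive C] [Linear k C] {vObj : V → C}
  {F : ∀ ⦃i j : V⦄, (i ⟶ j) → (vObj i ⟶ vObj j)}

lemma nonempty_path_of_ne_zero {i j : V}
    (hspan : Submodule.span k (Set.range fun p : Quiver.Path i j => evalPath vObj F p) = ⊤)
    {f : vObj i ⟶ vObj j} (hf : f ≠ 0) : Nonempty (Quiver.Path i j) := by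
  by_contra hempty
  rw [not_nonempty_iff, ← Set.range_eq_empty_iff (f := fun p => evalPath vObj F p)] at hempty
  rw [hempty, Submodule.span_empty] at hspan
  exact hf ((Submodule.mem_bot k).1 (hspan ▸ Submodule.mem_top))

lemma exists_eq_smul_id_of_forall_eq_nil {i : V}
    (hspan : Submodule.span k (Set.range fun p : Quiver.Path i i => evalPath vObj F p) = ⊤)
    (hnil : ∀ p : Quiver.Path i i, p = .nil) (f : vObj i ⟶ vObj i) :
    ∃ a : k, f = a • 𝟙 (vObj i) := by
  have hconst : (fun p : Quiver.Path i i => evalPath vObj F p) = fun _ => 𝟙 (vObj i) :=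
    funext fun p => by rw [hnil p, evalPath_nil]
  have : Nonempty (Quiver.Path i i) := ⟨.nil⟩
  rw [hconst, Set.range_const] at hspan
  obtain ⟨a, ha⟩ := Submodule.mem_span_singleton.1 (hspan ▸ Submodule.mem_top : f ∈ _)
  exact ⟨a, ha.symm⟩

variable [Nontrivial k]

lemma id_ne_zero_of_linearIndependent {i : V}
    (hindep : LinearIndependent k
      (fun p : {p : Quiver.Path i i // p.length ≤ 1} => evalPath vObj F p.1)) :
    𝟙 (vObj i) ≠ 0 := by
  simpa using hindep.ne_zero ⟨.nil, zero_le_one⟩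

lemma arrow_ne_zero_of_linearIndependent {i j : V}
    (hindep : LinearIndependent k
      (fun p : {p : Quiver.Path i j // p.length ≤ 1} => evalPath vObj F p.1))
    (a : i ⟶ j) : F a ≠ 0 := by
  simpa using hindep.ne_zero ⟨a.toPath, le_rfl⟩

lemma arrow_ne_smul_id_of_linearIndependent {i : V}
    (hindep : LinearIndependent k
      (fun p : {p : Quiver.Path i i // p.length ≤ 1} => evalPath vObj F p.1))
    (a : i ⟶ i) (c : k) : F a ≠ c • 𝟙 (vObj i) := by
  intro h
  have hpaths := hindep.eq_of_smul_apply_eq_smul_apply 1 c ⟨a.toPath, le_rfl⟩ ⟨.nil, zero_le_one⟩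
    one_ne_zero (by simpa using h)
  simpa using congrArg (fun p => p.1.length) hpaths

end PathCategory

/-- Let `(Q, I)` be a quiver with relations over a field `k`, with all relations
`k`-linear combinations of paths of length at least two, and let `C = kQ_I` be the
associated `k`-linear path category.  We model `C` abstractly: a `k`-linear category
whose objects are identified with the vertices of `Q` via `vObj`, in which
- the Hom-spaces are spanned by (the evaluations of) the paths of `Q`, and
- the evaluations of the paths of length `≤ 1` are linearly independent
  (this encodes that the defining relations only involve paths of length `≥ 2`).

Then `kQ_I` is a `k`-linear *direct* category — i.e. `End(c) ≅ k` for every object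
`c` and there is an ordinal-valued degree function which is strictly increased by
every nonzero non-endomorphism — if and only if `Q` is left rooted. -/
theorem pathCategory_direct_iff_leftRooted
    (k : Type*) [Field k]
    (V : Type u) [Quiver.{u + 1} V]
    (C : Type*) [Category C] [Preadditive C] [Linear k C]
    (vObj : V ≃ C)
    (F : ∀ ⦃i j : V⦄, (i ⟶ j) → (vObj i ⟶ vObj j))
    -- the Hom-spaces of `kQ_I` are spanned by the paths of `Q`
    (hspan : ∀ i j : V,
      Submodule.span k (Set.range fun p : Quiver.Path i j => evalPath vObj F p) = ⊤)
    -- the relations are combinations of paths of length at least two: the classes of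
    -- the paths of length `≤ 1` remain linearly independent in `kQ_I`
    (hindep : ∀ i j : V,
      LinearIndependent k
        (fun p : {p : Quiver.Path i j // p.length ≤ 1} => evalPath vObj F p.1)) :
    ((∀ (c : C) (f : c ⟶ c), ∃ a : k, f = a • 𝟙 c) ∧ (∀ c : C, (𝟙 c) ≠ 0) ∧
      ∃ deg : C → Ordinal.{u}, ∀ ⦃c d : C⦄ (f : c ⟶ d), c ≠ d → f ≠ 0 → deg c < deg d)
      ↔ IsLeftRooted V := by
  constructor
  · rintro ⟨hEnd, -, deg, hdeg⟩
    refine isLeftRooted_iff_exists_rank.2 ⟨fun i => deg (vObj i), fun i j a => ?_⟩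
    have hji : j ≠ i := by
      rintro rfl
      obtain ⟨c, hc⟩ := hEnd (vObj j) (F a)
      exact arrow_ne_smul_id_of_linearIndependent (hindep j j) a c hc
    exact hdeg (F a) (vObj.injective.ne hji) (arrow_ne_zero_of_linearIndependent (hindep j i) a)
  · intro h
    have hr : ∀ ⦃i j : V⦄, (j ⟶ i) → vertexRank V j < vertexRank V i :=
      fun _ _ => h.vertexRank_lt_of_arrow
    refine ⟨fun c f => ?_, fun c => ?_, fun c => vertexRank V (vObj.symm c),
      fun c d f hcd hf => ?_⟩
    · obtain ⟨i, rfl⟩ := vObj.surjective c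
      exact exists_eq_smul_id_of_forall_eq_nil (hspan i i) (Quiver.Path.eq_nil_of_arrow_lt hr) f
    · obtain ⟨i, rfl⟩ := vObj.surjective c
      exact id_ne_zero_of_linearIndependent (hindep i i)
    · obtain ⟨i, rfl⟩ := vObj.surjective c
      obtain ⟨j, rfl⟩ := vObj.surjective d
      obtain ⟨p⟩ := nonempty_path_of_ne_zero (hspan i j) hf
      simpa using p.apply_lt_of_arrow_lt hr (vObj.injective.ne_iff.1 hcd)
end
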